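/- Let G be a totally disconnected group and π a representation of G on a separated bornological vector space V. The map ι_V: Smooth(V) → V, ι_V(f) = f(e), induces a natural isomorphism Hom_G(W, V) ≅ Hom_G(W, Smooth(V)) for all separated smooth G-modules W; i.e., the smoothing functor is right adjoint to the forgetful functor from smooth representations to arbitrary representations. -/

import Mathlib

/-!
STATEMENT 19: For a totally disconnected group `G` and a representation of `G` on a
separated bornological vector space `V`, the map `ι_V : Smooth(V) → V`, `f ↦ f(e)`,
induces a natural bijection `Hom_G(W, V) ≅ Hom_G(W, Smooth(V))` for every separated
smooth `G`-module `W`; i.e. smoothing is right adjoint to the forgetful functor.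
-/

open Bornology Set
open scoped Pointwise

/-- A bornological vector space is separated if the only bounded linear subspace is `0`. -/
def SeparatedBorn (V : Type) [AddCommGroup V] [Module ℝ V] [Bornology V] : Prop :=
  ∀ W : Submodule ℝ V, IsBounded (W : Set V) → W = ⊥

variable (G : Type) [Group G] [TopologicalSpace G] [IsTopologicalGroup G]
  [TotallyDisconnectedSpace G] [LocallyCompactSpace G]
  [SecondCountableTopology G]

section Smoothing

variable (V : Type) [AddCommGroup V] [Module ℝ V] [Bornology V]
  [DistribMulAction G V] [SMulCommClass G ℝ V]

/-- A representation of `G` on a bornological vector space is smooth iff the pointwise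
stabilizer of every small subset is open. -/
def SmoothRep : Prop :=
  ∀ S : Set V, IsBounded S → IsOpen {g : G | ∀ v ∈ S, g • v = v}

/-- The smoothing `Smooth(V) = {f ∈ E(G,V) | f(t) = t · f(e)}`: smooth (locally
constant) functions `G → V` determined by their value at the identity. -/
def SmoothSub : Submodule ℝ (G → V) where
  carrier := {f | IsLocallyConstant f ∧ ∀ t : G, f t = t • f 1}
  add_mem' := by
    intro f g hf hg
    exact ⟨hf.1.comp₂ hg.1 (· + ·), fun t => by
      simp only [Pi.add_apply, hf.2 t, hg.2 t, smul_add]⟩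
  zero_mem' := ⟨IsLocallyConstant.const 0, fun t => by simp⟩
  smul_mem' := by
    intro r f hf
    exact ⟨hf.1.comp (r • ·), fun t => by
      simp only [Pi.smul_apply, hf.2 t, (smul_comm t r (f 1)).symm]⟩

/-- The bornology of `Smooth(V)` (the subspace bornology from `E(G,V)`): a set of
functions is small iff it is uniformly small on compact subsets of `G` and
equi-locally-constant. -/
def SmallSmooth (S : Set (SmoothSub G V)) : Prop :=
  (∀ K : Set G, IsCompact K → IsBounded {v | ∃ f ∈ S, ∃ g ∈ K, (f : G → V) g = v}) ∧
  (∀ t : G, ∃ U : Set G, IsOpen U ∧ t ∈ U ∧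
    ∀ f ∈ S, ∀ u ∈ U, (f : G → V) u = (f : G → V) t)

end Smoothing

/-!
A map `W → Smooth(V)` is determined by its composite with `ι_V`, since every `f ∈ Smooth(V)`
satisfies `f t = t • f e`; conversely an equivariant `ψ : W → V` lifts to `w ↦ (t ↦ t • ψ w)`.
Smoothness of `W` is what makes the lift land in `Smooth(V)` and send bounded sets to small
ones: the stabilizer of a bounded `S ⊆ W` is open, so orbit maps of `S` are constant on its
cosets, and finitely many cosets cover a compact `K`, whence `K • S` is bounded.
-/

section Adjunction

variable {G : Type} [Group G] [TopologicalSpace G]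
  {V : Type} [AddCommGroup V] [Module ℝ V] [DistribMulAction G V] [SMulCommClass G ℝ V]
  {W : Type} [AddCommGroup W] [DistribMulAction G W]

theorem SmoothSub.apply_eq_smul (f : SmoothSub G V) (t : G) :
    (f : G → V) t = t • (f : G → V) 1 :=
  f.2.2 t

def smoothEval : SmoothSub G V →ₗ[ℝ] V :=
  (LinearMap.proj 1).comp (SmoothSub G V).subtype

@[simp]
theorem smoothEval_apply (f : SmoothSub G V) : smoothEval f = (f : G → V) 1 :=
  rfl

theorem SmallSmooth.isBounded_image_smoothEval [Bornology V] {S : Set (SmoothSub G V)}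
    (hS : SmallSmooth G V S) : IsBounded (smoothEval '' S) :=
  (hS.1 {1} isCompact_singleton).subset <| by
    rintro _ ⟨f, hf, rfl⟩
    exact ⟨f, hf, 1, rfl, rfl⟩

theorem smoothEval_comp_smul {φ : W → SmoothSub G V}
    (hφ : ∀ (g : G) (w : W) (t : G), (φ (g • w) : G → V) t = (φ w : G → V) (t * g))
    (g : G) (w : W) : smoothEval (φ (g • w)) = g • smoothEval (φ w) := by
  rw [smoothEval_apply, hφ, one_mul, SmoothSub.apply_eq_smul, smoothEval_apply]

variable [Bornology W] [ContinuousMul G]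

theorem SmoothRep.exists_isOpen_smul_eq (hW : SmoothRep G W) {S : Set W} (hS : IsBounded S)
    (t : G) : ∃ U : Set G, IsOpen U ∧ t ∈ U ∧ ∀ u ∈ U, ∀ w ∈ S, u • w = t • w := by
  refine ⟨t • {g : G | ∀ w ∈ S, g • w = w}, (hW S hS).smul t,
    ⟨1, fun w _ => one_smul G w, mul_one t⟩, ?_⟩
  rintro _ ⟨g, hg, rfl⟩ w hw
  show (t * g) • w = t • w
  rw [mul_smul, hg w hw]

theorem SmoothRep.isBounded_smul (hW : SmoothRep G W)
    (hWb : ∀ (g : G) (S : Set W), IsBounded S → IsBounded ((g • ·) '' S))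
    {K : Set G} (hK : IsCompact K) {S : Set W} (hS : IsBounded S) : IsBounded (K • S) := by
  choose U hUopen hmem hU using fun t => hW.exists_isOpen_smul_eq hS t
  obtain ⟨F, -, hF, hKF⟩ := hK.elim_finite_subcover_image (fun t _ => hUopen t)
    fun t ht => mem_biUnion ht (hmem t)
  refine ((isBounded_biUnion hF).2 fun t _ => hWb t S hS).subset ?_
  refine smul_subset_iff.2 fun u hu w hw => ?_
  obtain ⟨t, ht, hut⟩ := mem_iUnion₂.1 (hKF hu)
  exact mem_biUnion ht ⟨w, hw, (hU t u hut w hw).symm⟩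

theorem orbit_mem_smoothSub (hW : SmoothRep G W) {ψ : W → V}
    (hψ : ∀ (g : G) (w : W), ψ (g • w) = g • ψ w) (w : W) :
    (fun t : G => t • ψ w) ∈ SmoothSub G V := by
  refine ⟨IsLocallyConstant.iff_exists_open _ |>.2 fun t => ?_,
    fun t => (congrArg (t • ·) (one_smul G (ψ w))).symm⟩
  obtain ⟨U, hUopen, htU, hU⟩ := hW.exists_isOpen_smul_eq (isBounded_singleton (x := w)) t
  exact ⟨U, hUopen, htU, fun u hu => by
    simp only [← hψ, hU u hu w (mem_singleton w)]⟩

variable [Module ℝ W]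

def toSmooth (hW : SmoothRep G W) (ψ : W →ₗ[ℝ] V)
    (hψ : ∀ (g : G) (w : W), ψ (g • w) = g • ψ w) : W →ₗ[ℝ] SmoothSub G V where
  toFun w := ⟨fun t => t • ψ w, orbit_mem_smoothSub hW hψ w⟩
  map_add' a b := Subtype.ext <| funext fun t => by simp [smul_add]
  map_smul' r a := Subtype.ext <| funext fun t => by simp [smul_comm t r]

theorem toSmooth_smoothEval_comp (hW : SmoothRep G W) {φ : W →ₗ[ℝ] SmoothSub G V}
    (hφ : ∀ (g : G) (w : W) (t : G), (φ (g • w) : G → V) t = (φ w : G → V) (t * g)) :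
    toSmooth hW (smoothEval ∘ₗ φ) (smoothEval_comp_smul hφ) = φ :=
  LinearMap.ext fun w => Subtype.ext <| funext fun t => (SmoothSub.apply_eq_smul (φ w) t).symm

variable (hW : SmoothRep G W) {ψ : W →ₗ[ℝ] V} (hψ : ∀ (g : G) (w : W), ψ (g • w) = g • ψ w)

theorem toSmooth_apply (w : W) (t : G) : (toSmooth hW ψ hψ w : G → V) t = t • ψ w :=
  rfl

theorem smoothEval_toSmooth (w : W) : smoothEval (toSmooth hW ψ hψ w) = ψ w :=
  one_smul G (ψ w)

theorem toSmooth_smul_apply (g : G) (w : W) (t : G) :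
    (toSmooth hW ψ hψ (g • w) : G → V) t = (toSmooth hW ψ hψ w : G → V) (t * g) := by
  rw [toSmooth_apply, toSmooth_apply, hψ, mul_smul]

theorem smallSmooth_image_toSmooth [Bornology V]
    (hWb : ∀ (g : G) (S : Set W), IsBounded S → IsBounded ((g • ·) '' S))
    (hψb : ∀ S : Set W, IsBounded S → IsBounded (ψ '' S)) {S : Set W} (hS : IsBounded S) :
    SmallSmooth G V (toSmooth hW ψ hψ '' S) := by
  refine ⟨fun K hK => (hψb _ (hW.isBounded_smul hWb hK hS)).subset ?_, fun t => ?_⟩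
  · rintro _ ⟨_, ⟨w, hw, rfl⟩, g, hg, rfl⟩
    exact ⟨g • w, smul_mem_smul hg hw, hψ g w⟩
  · obtain ⟨U, hUopen, htU, hU⟩ := hW.exists_isOpen_smul_eq hS t
    refine ⟨U, hUopen, htU, ?_⟩
    rintro _ ⟨w, hw, rfl⟩ u hu
    simp only [toSmooth_apply, ← hψ, hU u hu w hw]

end Adjunction

theorem stmt19
    (V : Type) [AddCommGroup V] [Module ℝ V] [Bornology V]
    [DistribMulAction G V] [SMulCommClass G ℝ V]
    (W : Type) [AddCommGroup W] [Module ℝ W] [Bornology W]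
    [DistribMulAction G W]
    (hWb : ∀ (g : G) (S : Set W), IsBounded S → IsBounded ((g • ·) '' S))
    -- `W` is a (separated) smooth `G`-module
    (hWsmooth : SmoothRep G W) :
    -- `Hom_G(W, Smooth(V)) ≅ Hom_G(W, V)` via composition with `ι_V : f ↦ f(e)`
    ∃ e :
      {φ : W →ₗ[ℝ] SmoothSub G V //
        (∀ (g : G) (w : W) (t : G), ((φ (g • w) : G → V)) t = (φ w : G → V) (t * g)) ∧
        (∀ S : Set W, IsBounded S → SmallSmooth G V (φ '' S))} ≃
      {ψ : W →ₗ[ℝ] V //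
        (∀ (g : G) (w : W), ψ (g • w) = g • ψ w) ∧
        (∀ S : Set W, IsBounded S → IsBounded (ψ '' S))},
      ∀ φ w, ((e φ : {ψ : W →ₗ[ℝ] V // _}) : W →ₗ[ℝ] V) w = ((φ : W →ₗ[ℝ] SmoothSub G V) w : G → V) 1 :=
  ⟨{ toFun := fun φ => ⟨smoothEval ∘ₗ φ.1, smoothEval_comp_smul φ.2.1,
        fun S hS => by simpa only [LinearMap.coe_comp, image_comp] using
          (φ.2.2 S hS).isBounded_image_smoothEval⟩
     invFun := fun ψ => ⟨toSmooth hWsmooth ψ.1 ψ.2.1, toSmooth_smul_apply hWsmooth ψ.2.1,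
        fun _ => smallSmooth_image_toSmooth hWsmooth ψ.2.1 hWb ψ.2.2⟩
     left_inv := fun φ => Subtype.ext (toSmooth_smoothEval_comp hWsmooth φ.2.1)
     right_inv := fun ψ => Subtype.ext (LinearMap.ext (smoothEval_toSmooth hWsmooth ψ.2.1)) },
    fun _ _ => rfl⟩
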